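/- The generalized Yehia Hamiltonian Ĥ₁ = J₁²+J₂²+2J₃²+2a x₁ − bC₁/x₃² + c/√(x₁²+x₂²) + ((2C₁−x₃²)/x₂²)(d + e x₁/√(x₁²+x₂²)) and the integral Ĥ₂ = (J₁²−J₂²−2ax₁+b(x₁²−x₂²)/x₃²)² + (2J₁J₂−2ax₂+2bx₁x₂/x₃²)² + x₂^{-4}(dx₃² + (cx₂²+ex₃²x₁)/√(x₁²+x₂²))(2x₂²(J₁²+J₂²)+dx₃²+(cx₂²+ex₃²x₁)/√(x₁²+x₂²)) − 4ax₃²(dx₁+e√(x₁²+x₂²))/x₂² − (2b/x₂²)((√(x₁²+x₂²)(cx₂²−ex₃²x₁))/x₃² − dx₁²) satisfy {Ĥ₁, Ĥ₂} = 0 with respect to the Lie–Poisson bracket on e(3)*, on the level set C₂ = x₁J₁+x₂J₂+x₃J₃ = 0. -/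

import Mathlib

noncomputable section

/-- The Levi-Civita symbol `ε_{ijk}` on three indices. -/
def eps (i j k : Fin 3) : ℝ :=
  ((j.val : ℝ) - i.val) * ((k.val : ℝ) - j.val) * ((k.val : ℝ) - i.val) / 2

/-- Phase space e(3)* with coordinates `z = (J, x)`. -/
abbrev E3 := (Fin 3 → ℝ) × (Fin 3 → ℝ)

/-- Partial derivative in the direction of `Jᵢ`. -/
def pJ (i : Fin 3) (f : E3 → ℝ) (z : E3) : ℝ := fderiv ℝ f z (Pi.single i 1, 0)

/-- Partial derivative in the direction of `xᵢ`. -/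
def px (i : Fin 3) (f : E3 → ℝ) (z : E3) : ℝ := fderiv ℝ f z (0, Pi.single i 1)

/-- The Lie–Poisson bracket on e(3)*:
`{J_i,J_j}=ε_{ijk}J_k`, `{J_i,x_j}=ε_{ijk}x_k`, `{x_i,x_j}=0`. -/
def e3br (f g : E3 → ℝ) (z : E3) : ℝ :=
  ∑ i, ∑ j, ∑ k, eps i j k *
    (z.1 k * pJ i f z * pJ j g z
     + z.2 k * (pJ i f z * px j g z + px i f z * pJ j g z))

/-- The generalized Yehia Hamiltonian `Ĥ₁` on e(3)*. -/
def yehiaH1 (a b c d e : ℝ) (w : E3) : ℝ :=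
  (w.1 0) ^ 2 + (w.1 1) ^ 2 + 2 * (w.1 2) ^ 2 + 2 * a * w.2 0
  - b * ((w.2 0) ^ 2 + (w.2 1) ^ 2 + (w.2 2) ^ 2) / (w.2 2) ^ 2
  + c / Real.sqrt ((w.2 0) ^ 2 + (w.2 1) ^ 2)
  + (2 * ((w.2 0) ^ 2 + (w.2 1) ^ 2 + (w.2 2) ^ 2) - (w.2 2) ^ 2) / (w.2 1) ^ 2
    * (d + e * w.2 0 / Real.sqrt ((w.2 0) ^ 2 + (w.2 1) ^ 2))

/-- The second Yehia integral `Ĥ₂` on e(3)*. -/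
def yehiaH2 (a b c d e : ℝ) (w : E3) : ℝ :=
  ((w.1 0) ^ 2 - (w.1 1) ^ 2 - 2 * a * w.2 0
    + b * ((w.2 0) ^ 2 - (w.2 1) ^ 2) / (w.2 2) ^ 2) ^ 2
  + (2 * w.1 0 * w.1 1 - 2 * a * w.2 1
    + 2 * b * w.2 0 * w.2 1 / (w.2 2) ^ 2) ^ 2
  + (1 / (w.2 1) ^ 4)
    * (d * (w.2 2) ^ 2
       + (c * (w.2 1) ^ 2 + e * (w.2 2) ^ 2 * w.2 0)
         / Real.sqrt ((w.2 0) ^ 2 + (w.2 1) ^ 2))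
    * (2 * (w.2 1) ^ 2 * ((w.1 0) ^ 2 + (w.1 1) ^ 2) + d * (w.2 2) ^ 2
       + (c * (w.2 1) ^ 2 + e * (w.2 2) ^ 2 * w.2 0)
         / Real.sqrt ((w.2 0) ^ 2 + (w.2 1) ^ 2))
  - 4 * a * (w.2 2) ^ 2
      * (d * w.2 0 + e * Real.sqrt ((w.2 0) ^ 2 + (w.2 1) ^ 2)) / (w.2 1) ^ 2
  - (2 * b / (w.2 1) ^ 2)
      * (Real.sqrt ((w.2 0) ^ 2 + (w.2 1) ^ 2)
          * (c * (w.2 1) ^ 2 - e * (w.2 2) ^ 2 * w.2 0) / (w.2 2) ^ 2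
         - d * (w.2 0) ^ 2)

/-
The bracket `{f, g}(z)` is the derivative of `g` along the Hamiltonian vector field of `f`,
which on e(3)* is given by the Euler–Poisson equations
`J̇ = J × ∂f/∂J + x × ∂f/∂x`, `ẋ = x × ∂f/∂J`.
Keeping `r = √(x₁² + x₂²)` as an atom, the derivative of `Ĥ₂` along the field of `Ĥ₁` is a
rational function of `J`, `x` and `r`; once `J₃` is eliminated through `C₂ = 0`, its numerator
lies in the ideal generated by `r² - x₁² - x₂²`.
-/

open Matrix

def gradJ (L : E3 →L[ℝ] ℝ) : Fin 3 → ℝ := fun i => L (Pi.single i 1, 0)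

def gradx (L : E3 →L[ℝ] ℝ) : Fin 3 → ℝ := fun i => L (0, Pi.single i 1)

theorem apply_eq_dotProduct_gradJ_add_dotProduct_gradx (L : E3 →L[ℝ] ℝ) (v : E3) :
    L v = v.1 ⬝ᵥ gradJ L + v.2 ⬝ᵥ gradx L := by
  have hv : v = ∑ i, v.1 i • ((Pi.single i 1, 0) : E3) + ∑ i, v.2 i • ((0, Pi.single i 1) : E3) := by
    ext i <;> fin_cases i <;> simp [Fin.sum_univ_three]
  conv_lhs => rw [hv]
  simp only [map_add, map_sum, map_smul, smul_eq_mul, dotProduct, gradJ, gradx]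

def hamiltonianVectorField (L : E3 →L[ℝ] ℝ) (z : E3) : E3 :=
  (z.1 ⨯₃ gradJ L + z.2 ⨯₃ gradx L, z.2 ⨯₃ gradJ L)

theorem e3br_eq_fderiv_hamiltonianVectorField (f g : E3 → ℝ) (z : E3) :
    e3br f g z = fderiv ℝ g z (hamiltonianVectorField (fderiv ℝ f z) z) := by
  rw [apply_eq_dotProduct_gradJ_add_dotProduct_gradx]
  simp [e3br, pJ, px, gradJ, gradx, hamiltonianVectorField, eps, Fin.sum_univ_three, cross_apply,
    dotProduct]
  ring

def linForm (u w : Fin 3 → ℝ) : E3 →L[ℝ] ℝ :=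
  LinearMap.toContinuousLinearMap
    { toFun := fun v => v.1 ⬝ᵥ u + v.2 ⬝ᵥ w
      map_add' := fun v v' => by
        simp only [Prod.fst_add, Prod.snd_add, add_dotProduct]
        ring
      map_smul' := fun t v => by
        simp only [Prod.smul_fst, Prod.smul_snd, smul_dotProduct, smul_eq_mul, RingHom.id_apply]
        ring }

@[simp] theorem linForm_apply (u w : Fin 3 → ℝ) (v : E3) :
    linForm u w v = v.1 ⬝ᵥ u + v.2 ⬝ᵥ w := by
  simp [linForm]

@[simp] theorem gradJ_linForm (u w : Fin 3 → ℝ) : gradJ (linForm u w) = u := by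
  ext i; simp [gradJ]

@[simp] theorem gradx_linForm (u w : Fin 3 → ℝ) : gradx (linForm u w) = w := by
  ext i; simp [gradx]

@[simp] theorem hamiltonianVectorField_linForm (u w : Fin 3 → ℝ) (z : E3) :
    hamiltonianVectorField (linForm u w) z = (z.1 ⨯₃ u + z.2 ⨯₃ w, z.2 ⨯₃ u) := by
  simp [hamiltonianVectorField]

theorem hasFDerivAt_J (i : Fin 3) (z : E3) :
    HasFDerivAt (fun w : E3 => w.1 i) (linForm (Pi.single i 1) 0) z := by
  convert (linForm (Pi.single i 1) 0).hasFDerivAt using 1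
  ext w; simp

theorem hasFDerivAt_x (i : Fin 3) (z : E3) :
    HasFDerivAt (fun w : E3 => w.2 i) (linForm 0 (Pi.single i 1)) z := by
  convert (linForm 0 (Pi.single i 1)).hasFDerivAt using 1
  ext w; simp

theorem HasFDerivAt.div {E : Type*} [NormedAddCommGroup E] [NormedSpace ℝ E] {f g : E → ℝ}
    {f' g' : E →L[ℝ] ℝ} {z : E} (hf : HasFDerivAt f f' z) (hg : HasFDerivAt g g' z)
    (hz : g z ≠ 0) :
    HasFDerivAt (fun w => f w / g w) ((g z)⁻¹ • f' - (f z / g z ^ 2) • g') z := by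
  have hinv : HasFDerivAt (fun w => (g w)⁻¹) (-(g z ^ 2)⁻¹ • g') z :=
    (hasDerivAt_inv hz).comp_hasFDerivAt z hg
  simp only [div_eq_mul_inv]
  refine (hf.mul hinv).congr_fderiv ?_
  ext v; simp; ring

theorem hasFDerivAt_sqrt_sq_add_sq (z : E3) (hz : (z.2 0) ^ 2 + (z.2 1) ^ 2 ≠ 0) :
    HasFDerivAt (fun w : E3 => √((w.2 0) ^ 2 + (w.2 1) ^ 2))
      (linForm 0 ![z.2 0 / √((z.2 0) ^ 2 + (z.2 1) ^ 2),
        z.2 1 / √((z.2 0) ^ 2 + (z.2 1) ^ 2), 0]) z := by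
  refine (((hasFDerivAt_x 0 z).pow 2).add ((hasFDerivAt_x 1 z).pow 2)).sqrt hz |>.congr_fderiv ?_
  ext v
  · simp
  · simp [dotProduct, Fin.sum_univ_three]
    field_simp

def yehiaH1Deriv (a b c d e : ℝ) (J x : Fin 3 → ℝ) (r : ℝ) : E3 →L[ℝ] ℝ :=
  linForm ![2 * J 0, 2 * J 1, 4 * J 2]
    ![2 * a - 2 * b * x 0 / x 2 ^ 2 - c * x 0 / r ^ 3 + 4 * x 0 * (d + e * x 0 / r) / x 1 ^ 2
        + e * (2 * (x 0 ^ 2 + x 1 ^ 2) + x 2 ^ 2) / r ^ 3,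
      -2 * b * x 1 / x 2 ^ 2 - c * x 1 / r ^ 3
        - 2 * (2 * x 0 ^ 2 + x 2 ^ 2) * (d + e * x 0 / r) / x 1 ^ 3
        - e * x 0 * (2 * (x 0 ^ 2 + x 1 ^ 2) + x 2 ^ 2) / (x 1 * r ^ 3),
      2 * b * (x 0 ^ 2 + x 1 ^ 2) / x 2 ^ 3 + 2 * x 2 * (d + e * x 0 / r) / x 1 ^ 2]

section

variable (a b c d e : ℝ) {J x : Fin 3 → ℝ} {r : ℝ}
  (hx1 : x 1 ≠ 0) (hx2 : x 2 ≠ 0) (hr : √(x 0 ^ 2 + x 1 ^ 2) = r) (hr0 : r ≠ 0)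
include hx1 hx2 hr hr0

theorem hasFDerivAt_yehiaH1 :
    HasFDerivAt (yehiaH1 a b c d e) (yehiaH1Deriv a b c d e J x r) (J, x) := by
  have hs : x 0 ^ 2 + x 1 ^ 2 ≠ 0 := fun h => hr0 (by simp [← hr, h])
  have hr2 : r ^ 2 = x 0 ^ 2 + x 1 ^ 2 := by rw [← hr, Real.sq_sqrt (by positivity)]
  have hsq := hasFDerivAt_sqrt_sq_add_sq (J, x) hs
  have hsq0 : √((J, x).2 0 ^ 2 + (J, x).2 1 ^ 2) ≠ 0 := by simpa [hr] using hr0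
  have hJ := fun i => hasFDerivAt_J i (J, x)
  have hx := fun i => hasFDerivAt_x i (J, x)
  have hC1 := (((hx 0).pow 2).add ((hx 1).pow 2)).add ((hx 2).pow 2)
  have hH1 := (((((((hJ 0).pow 2).add ((hJ 1).pow 2)).add (((hJ 2).pow 2).const_mul 2)).add
      ((hx 0).const_mul (2 * a))).sub
      ((hC1.const_mul b).div ((hx 2).pow 2) (pow_ne_zero 2 hx2))).add
      ((hasFDerivAt_const c _).div hsq hsq0)).add
      ((((hC1.const_mul 2).sub ((hx 2).pow 2)).div ((hx 1).pow 2) (pow_ne_zero 2 hx1)).mul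
        ((hasFDerivAt_const d _).add (((hx 0).const_mul e).div hsq hsq0)))
  refine hH1.congr_fderiv ?_
  ext v <;> simp [yehiaH1Deriv, hr, dotProduct, Fin.sum_univ_three] <;> field_simp <;> grind

theorem fderiv_yehiaH2_apply_hamiltonianVectorField_eq_zero (hC : x ⬝ᵥ J = 0) :
    fderiv ℝ (yehiaH2 a b c d e) (J, x)
      (hamiltonianVectorField (yehiaH1Deriv a b c d e J x r) (J, x)) = 0 := by
  have hs : x 0 ^ 2 + x 1 ^ 2 ≠ 0 := fun h => hr0 (by simp [← hr, h])
  have hr2 : r ^ 2 = x 0 ^ 2 + x 1 ^ 2 := by rw [← hr, Real.sq_sqrt (by positivity)]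
  have hsq := hasFDerivAt_sqrt_sq_add_sq (J, x) hs
  have hsq0 : √((J, x).2 0 ^ 2 + (J, x).2 1 ^ 2) ≠ 0 := by simpa [hr] using hr0
  have hJ := fun i => hasFDerivAt_J i (J, x)
  have hx := fun i => hasFDerivAt_x i (J, x)
  have hA := ((((hJ 0).pow 2).sub ((hJ 1).pow 2)).sub ((hx 0).const_mul (2 * a))).add
      (((((hx 0).pow 2).sub ((hx 1).pow 2)).const_mul b).div ((hx 2).pow 2) (pow_ne_zero 2 hx2))
  have hB := (((((hJ 0).const_mul 2).mul (hJ 1)).sub ((hx 1).const_mul (2 * a))).add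
      ((((hx 0).const_mul (2 * b)).mul (hx 1)).div ((hx 2).pow 2) (pow_ne_zero 2 hx2)))
  have hN := ((((hx 1).pow 2).const_mul c).add ((((hx 2).pow 2).const_mul e).mul (hx 0))).div
      hsq hsq0
  have hP := (((hx 2).pow 2).const_mul d).add hN
  have hQ := (((((hx 1).pow 2).const_mul 2).mul (((hJ 0).pow 2).add ((hJ 1).pow 2))).add
      (((hx 2).pow 2).const_mul d)).add hN
  have hH2 := ((((hA.pow 2).add (hB.pow 2)).add
      ((((hasFDerivAt_const 1 _).div ((hx 1).pow 4) (pow_ne_zero 4 hx1)).mul hP).mul hQ)).sub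
      (((((hx 2).pow 2).const_mul (4 * a)).mul (((hx 0).const_mul d).add (hsq.const_mul e))).div
        ((hx 1).pow 2) (pow_ne_zero 2 hx1))).sub
      (((hasFDerivAt_const (2 * b) _).div ((hx 1).pow 2) (pow_ne_zero 2 hx1)).mul
        (((hsq.mul ((((hx 1).pow 2).const_mul c).sub ((((hx 2).pow 2).const_mul e).mul (hx 0)))).div
          ((hx 2).pow 2) (pow_ne_zero 2 hx2)).sub (((hx 0).pow 2).const_mul d)))
  have hJ2 : J 2 = -(x 0 * J 0 + x 1 * J 1) / x 2 := by
    simp only [dotProduct, Fin.sum_univ_three] at hC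
    field_simp
    linarith
  rw [show fderiv ℝ (yehiaH2 a b c d e) (J, x) = _ from hH2.fderiv]
  simp [yehiaH1Deriv, hr, dotProduct, Fin.sum_univ_three, cross_apply]
  rw [hJ2]
  field_simp
  grind

end

/-- On the level set `C₂ = ∑xᵢJᵢ = 0` (and away from the singular loci
`x₂ = 0`, `x₃ = 0`, `x₁²+x₂² = 0`), the Yehia Hamiltonian `Ĥ₁` and its
integral `Ĥ₂` are in involution with respect to the Lie–Poisson bracket on
e(3)*. -/
theorem yehia_involution (a b c d e : ℝ) :
    ∀ z : E3, z.2 1 ≠ 0 → z.2 2 ≠ 0 → (z.2 0) ^ 2 + (z.2 1) ^ 2 ≠ 0 →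
      (∑ i, z.2 i * z.1 i) = 0 →
      e3br (yehiaH1 a b c d e) (yehiaH2 a b c d e) z = 0 := by
  rintro ⟨J, x⟩ hx1 hx2 hs hC
  have hr0 : √(x 0 ^ 2 + x 1 ^ 2) ≠ 0 :=
    Real.sqrt_ne_zero'.2 (lt_of_le_of_ne (by positivity) (Ne.symm hs))
  rw [e3br_eq_fderiv_hamiltonianVectorField,
    (hasFDerivAt_yehiaH1 a b c d e hx1 hx2 rfl hr0).fderiv]
  exact fderiv_yehiaH2_apply_hamiltonianVectorField_eq_zero a b c d e hx1 hx2 rfl hr0 hC
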